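/- In the semidirect product G = Z_{n'} ⋊ Z_{2^q} with odd n' ≥ 3, where the generator w of Z_{2^q} acts on the generator u of Z_{n'} by inversion, any normal subgroup containing an element w^α u^β with α odd is the whole group G. -/
import Mathlib


/-- The group `Z_{n'} ⋊ Z_{2^q} = ⟨u, w | u^{n'} = 1, w^{2^q} = 1, w u w⁻¹ = u⁻¹⟩`,
presented on generators `u, w` (encoded as `0, 1 : Fin 2`). -/
def metaDihedralRels (m q : ℕ) : Set (FreeGroup (Fin 2)) :=
  { (FreeGroup.of 0) ^ m,
    (FreeGroup.of 1) ^ (2 ^ q),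
    FreeGroup.of 1 * FreeGroup.of 0 * (FreeGroup.of 1)⁻¹ * FreeGroup.of 0 }

abbrev MetaDihedral (m q : ℕ) := PresentedGroup (metaDihedralRels m q)

lemma metaDihedral_rel_one {m q : ℕ} {r : FreeGroup (Fin 2)} (hr : r ∈ metaDihedralRels m q) :
    PresentedGroup.mk (metaDihedralRels m q) r = 1 := by
  have : r ∈ Subgroup.normalClosure (metaDihedralRels m q) :=
    Subgroup.subset_normalClosure hr
  exact (QuotientGroup.eq_one_iff r).2 this

/-- In `Z_{n'} ⋊ Z_{2^q}` (`n'` odd, action by inversion), a normal subgroup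
containing an element `w^α u^β` with `α` odd is the whole group. -/
theorem stmt12 (n' q : ℕ) (h3 : 3 ≤ n') (hodd : Odd n') (hq : 1 ≤ q)
    (K : Subgroup (MetaDihedral n' q)) (hK : K.Normal) (α β : ℤ) (hα : Odd α)
    (hmem : (PresentedGroup.of 1 : MetaDihedral n' q) ^ α *
      (PresentedGroup.of 0 : MetaDihedral n' q) ^ β ∈ K) :
    K = ⊤ := by
  set u : MetaDihedral n' q := PresentedGroup.of 0 with hu
  set w : MetaDihedral n' q := PresentedGroup.of 1 with hw
  -- relations
  have hrel1 : u ^ n' = 1 := by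
    have := metaDihedral_rel_one (m := n') (q := q)
      (r := (FreeGroup.of 0) ^ n') (by left; rfl)
    simpa [u, PresentedGroup.of, map_pow] using this
  have hrel2 : w ^ (2 ^ q) = 1 := by
    have := metaDihedral_rel_one (m := n') (q := q)
      (r := (FreeGroup.of 1) ^ (2 ^ q)) (by right; left; rfl)
    simpa [w, PresentedGroup.of, map_pow] using this
  have hrel3 : w * u * w⁻¹ * u = 1 := by
    have := metaDihedral_rel_one (m := n') (q := q)
      (r := FreeGroup.of 1 * FreeGroup.of 0 * (FreeGroup.of 1)⁻¹ * FreeGroup.of 0)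
      (by right; right; rfl)
    simpa [u, w, PresentedGroup.of, map_mul, map_inv] using this
  have hconj : w * u * w⁻¹ = u⁻¹ := mul_eq_one_iff_eq_inv.mp hrel3
  have h1 : w * u = u⁻¹ * w := by rw [← hconj]; simp [mul_assoc]
  have h2 : w * u⁻¹ = u * w := by
    calc w * u⁻¹ = u * (u⁻¹ * w) * u⁻¹ := by simp [mul_assoc]
      _ = u * (w * u) * u⁻¹ := by rw [← h1]
      _ = u * w := by simp [mul_assoc]
  -- w^2 commutes with u
  have hcw : Commute (w ^ (2 : ℤ)) u := by
    show w ^ (2 : ℤ) * u = u * w ^ (2 : ℤ)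
    have hww : w ^ (2 : ℤ) = w * w := by rw [show (2:ℤ) = 1 + 1 by norm_num, zpow_add, zpow_one]
    rw [hww, mul_assoc, h1, ← mul_assoc, h2, mul_assoc]
  have hct : ∀ m : ℤ, Commute (w ^ (2 * m)) u := fun m => by
    rw [zpow_mul]; exact hcw.zpow_left m
  obtain ⟨t, ht⟩ := hα
  have hsplit : w ^ α = w ^ (2 * t) * w := by rw [ht, zpow_add, zpow_one]
  have hwα : w ^ α * u * (w ^ α)⁻¹ = u⁻¹ := by
    rw [hsplit, mul_inv_rev]
    have hc' := (hct t).inv_right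
    calc w ^ (2 * t) * w * u * (w⁻¹ * (w ^ (2 * t))⁻¹)
        = w ^ (2 * t) * (w * u * w⁻¹) * (w ^ (2 * t))⁻¹ := by simp [mul_assoc]
      _ = w ^ (2 * t) * u⁻¹ * (w ^ (2 * t))⁻¹ := by rw [hconj]
      _ = u⁻¹ := by rw [hc'.eq]; simp [mul_assoc]
  -- the element x = w^α u^β
  set x : MetaDihedral n' q := w ^ α * u ^ β with hx
  have hmid : u ^ β * u * (u ^ β)⁻¹ = u := by
    rw [((Commute.refl u).zpow_left β).eq]; simp [mul_assoc]
  have hxux : x * u * x⁻¹ = u⁻¹ := by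
    calc x * u * x⁻¹ = w ^ α * (u ^ β * u * (u ^ β)⁻¹) * (w ^ α)⁻¹ := by
          rw [hx, mul_inv_rev]; simp [mul_assoc]
      _ = w ^ α * u * (w ^ α)⁻¹ := by rw [hmid]
      _ = u⁻¹ := hwα
  have hu2 : u ^ (2 : ℤ) ∈ K := by
    have hk1 : u * x⁻¹ * u⁻¹ ∈ K := hK.conj_mem _ (K.inv_mem hmem) u
    have hk2 : x * (u * x⁻¹ * u⁻¹) ∈ K := K.mul_mem hmem hk1
    have hk3 : x * (u * x⁻¹ * u⁻¹) = u⁻¹ * u⁻¹ := by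
      rw [show x * (u * x⁻¹ * u⁻¹) = (x * u * x⁻¹) * u⁻¹ by simp [mul_assoc], hxux]
    rw [hk3] at hk2
    have hinv : (u⁻¹ * u⁻¹)⁻¹ = u ^ (2 : ℤ) := by group
    exact hinv ▸ K.inv_mem hk2
  -- n' odd ⇒ u ∈ K
  obtain ⟨k, hk⟩ := hodd
  have hun : u ^ ((n' : ℤ)) = 1 := by rw [zpow_natCast]; exact hrel1
  have huK : u ∈ K := by
    have key : (u ^ (2 : ℤ)) ^ (-(k : ℤ)) = u := by
      rw [← zpow_mul]
      have h2k : (2 : ℤ) * (-(k : ℤ)) = 1 - (n' : ℤ) := by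
        have : (n' : ℤ) = 2 * k + 1 := by exact_mod_cast hk
        omega
      rw [h2k, zpow_sub, hun, zpow_one]; simp
    exact key ▸ K.zpow_mem hu2 _
  -- w^α ∈ K
  have hwαK : w ^ α ∈ K := by
    have hxw : w ^ α = x * (u ^ β)⁻¹ := by rw [hx]; simp [mul_assoc]
    rw [hxw]
    exact K.mul_mem hmem (K.inv_mem (K.zpow_mem huK β))
  -- α coprime to 2^q ⇒ w ∈ K
  have hwK : w ∈ K := by
    have hcop : IsCoprime α ((2 : ℤ) ^ q) := by
      have hc2 : IsCoprime α 2 := ⟨1, -t, by rw [ht]; ring⟩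
      exact hc2.pow_right
    obtain ⟨a, b, hab⟩ := hcop
    have hw2q : w ^ ((2 : ℤ) ^ q) = 1 := by
      rw [show ((2 : ℤ) ^ q) = ((2 ^ q : ℕ) : ℤ) by push_cast; ring, zpow_natCast]
      exact hrel2
    have key : w = (w ^ α) ^ a * (w ^ ((2 : ℤ) ^ q)) ^ b := by
      rw [← zpow_mul, ← zpow_mul, ← zpow_add]
      rw [show α * a + 2 ^ q * b = a * α + b * 2 ^ q by ring, hab, zpow_one]
    rw [key, hw2q, one_zpow, mul_one]
    exact K.zpow_mem hwαK a
  -- conclude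
  rw [eq_top_iff, ← PresentedGroup.closure_range_of (metaDihedralRels n' q)]
  rw [Subgroup.closure_le]
  rintro _ ⟨i, rfl⟩
  fin_cases i
  · exact huK
  · exact hwK
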